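/- Let k ≥ 2 be a natural number. For every finitely supported function u : ℤ → ℂ with u(0) = 0, one has ∑_{n ∈ ℤ} |2u(n) − u(n+1) − u(n−1)|² n^{2k} ≥ k(k−1)(k − 3/2)² · ∑_{n ∈ ℤ} |u(n)|² n^{2k−4}. -/

import Mathlib

/-!
With `d = u (· + 1) - u`, the left side is `∑ (m + 1)^{2k} ‖d (m + 1) - d m‖²`, and the claim is
the composition of two weighted discrete Hardy inequalities, with `ν n = (n (n + 1))^{k-1}`:
`k (k - 1) ∑ ν ‖d‖² ≤ ∑ (m + 1)^{2k} ‖Δd‖²` and `(k - 3/2)² ∑ n^{2k-4} ‖u‖² ≤ ∑ ν ‖Δu‖²`.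

Both come from the ground state representation: for `w ≥ 0` and `φ > 0`,
`∑ w ‖Δf‖² ≥ ∑ (Lφ / φ) ‖f‖²` with `Lφ n = w n (φ n - φ (n + 1)) + w (n - 1) (φ n - φ (n - 1))`.
For the first inequality take `w m = ((m + 1/2)(m + 3/2))^k ≤ (m + 1)^{2k}` and `φ m = |m + 1/2|^{1-k}`,
for the second `w = ν` and `φ n = |n|^{3/2-k}`. The Hardy weights `Lφ / φ` are symmetric under a
reflection and explicit; they are bounded below by the even part of the binomial expansion,
`(y + 1)^k + (y - 1)^k ≥ 2 y^k + k (k - 1) y^{k-2}`, and, for the second one, by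
`√(1 + t) + √(1 - t) ≤ 2 - t² / 4`.
-/

open Function

lemma finite_support_comp_add_right {G M : Type*} [AddGroup G] [Zero M] {f : G → M}
    (hf : (support f).Finite) (c : G) : (support fun n => f (n + c)).Finite :=
  hf.preimage (add_left_injective c).injOn

lemma finite_support_forward_sub {G M : Type*} [AddGroup G] [One G] [AddGroup M] {f : G → M}
    (hf : (support f).Finite) : (support fun n => f (n + 1) - f n).Finite :=
  ((finite_support_comp_add_right hf 1).union hf).subset (support_sub _ _)

lemma summable_mul_norm_sq {ι E : Type*} [NormedAddCommGroup E] {f : ι → E}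
    (hf : (support f).Finite) (c : ι → ℝ) : Summable fun n => c n * ‖f n‖ ^ 2 :=
  summable_of_hasFiniteSupport <| hf.subset fun n hn h => hn (by simp [h])

section GroundState

variable {E : Type*} [NormedAddCommGroup E] [InnerProductSpace ℝ E]

noncomputable def hardyWeight (w φ : ℤ → ℝ) (n : ℤ) : ℝ :=
  (w n * (φ n - φ (n + 1)) + w (n - 1) * (φ n - φ (n - 1))) / φ n

theorem norm_sub_sq_eq_ground_state {a b : ℝ} (ha : a ≠ 0) (hb : b ≠ 0) (x y : E) :
    ‖y - x‖ ^ 2 =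
      a * b * ‖b⁻¹ • y - a⁻¹ • x‖ ^ 2 + (1 - a / b) * ‖y‖ ^ 2 - (b / a - 1) * ‖x‖ ^ 2 := by
  rw [norm_sub_sq_real, norm_sub_sq_real, norm_smul, norm_smul, real_inner_smul_left,
    real_inner_smul_right, real_inner_comm, Real.norm_eq_abs, Real.norm_eq_abs, mul_pow, mul_pow,
    sq_abs, sq_abs]
  field_simp
  ring

theorem tsum_hardyWeight_mul_le {w φ : ℤ → ℝ} {f : ℤ → E} (hw : ∀ n, 0 ≤ w n)
    (hφ : ∀ n, 0 < φ n) (hf : (support f).Finite) :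
    ∑' n, hardyWeight w φ n * ‖f n‖ ^ 2 ≤ ∑' n, w n * ‖f (n + 1) - f n‖ ^ 2 := by
  set P : ℤ → ℝ := fun n => w n * (1 - φ n / φ (n + 1)) * ‖f (n + 1)‖ ^ 2
  set Q : ℤ → ℝ := fun n => w n * (φ (n + 1) / φ n - 1) * ‖f n‖ ^ 2
  have hP : Summable P := summable_mul_norm_sq (finite_support_comp_add_right hf 1) _
  have hQ : Summable Q := summable_mul_norm_sq hf _
  have hP_shift : ∑' n, P n = ∑' n, w (n - 1) * (1 - φ (n - 1) / φ n) * ‖f n‖ ^ 2 := by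
    rw [← (Equiv.subRight (1 : ℤ)).tsum_eq]
    simp only [P, Equiv.subRight_apply, sub_add_cancel]
  calc ∑' n, hardyWeight w φ n * ‖f n‖ ^ 2
      = ∑' n, (w (n - 1) * (1 - φ (n - 1) / φ n) * ‖f n‖ ^ 2 - Q n) := by
        refine tsum_congr fun n => ?_
        simp only [hardyWeight, Q]
        field_simp [(hφ n).ne']
        ring
    _ = ∑' n, (P n - Q n) := by
        rw [(summable_mul_norm_sq hf _).tsum_sub hQ, ← hP_shift, hP.tsum_sub hQ]
    _ ≤ ∑' n, w n * ‖f (n + 1) - f n‖ ^ 2 := by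
        refine (hP.sub hQ).tsum_le_tsum (fun n => ?_)
          (summable_mul_norm_sq (finite_support_forward_sub hf) _)
        rw [norm_sub_sq_eq_ground_state (hφ n).ne' (hφ (n + 1)).ne']
        have := mul_nonneg (mul_nonneg (hw n) (mul_nonneg (hφ n).le (hφ (n + 1)).le))
          (sq_nonneg ‖(φ (n + 1))⁻¹ • f (n + 1) - (φ n)⁻¹ • f n‖)
        simp only [P, Q]
        nlinarith

theorem tsum_mul_norm_sq_le_of_le_hardyWeight {w φ B : ℤ → ℝ} {f : ℤ → E} (hw : ∀ n, 0 ≤ w n)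
    (hφ : ∀ n, 0 < φ n) (hf : (support f).Finite)
    (hB : ∀ n, f n ≠ 0 → B n ≤ hardyWeight w φ n) :
    ∑' n, B n * ‖f n‖ ^ 2 ≤ ∑' n, w n * ‖f (n + 1) - f n‖ ^ 2 := by
  refine le_trans ?_ (tsum_hardyWeight_mul_le hw hφ hf)
  refine (summable_mul_norm_sq hf B).tsum_le_tsum (fun n => ?_) (summable_mul_norm_sq hf _)
  by_cases h : f n = 0
  · simp [h]
  · exact mul_le_mul_of_nonneg_right (hB n h) (sq_nonneg _)

theorem hardyWeight_reflect {w φ : ℤ → ℝ} (c : ℤ) (hw : ∀ n, w (c - 1 - n) = w n)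
    (hφ : ∀ n, φ (c - n) = φ n) (n : ℤ) : hardyWeight w φ (c - n) = hardyWeight w φ n := by
  have h₁ : w (c - n) = w (n - 1) := by rw [← hw (n - 1)]; congr 1; ring
  have h₂ : w (c - n - 1) = w n := by rw [← hw n]; congr 1; ring
  have h₃ : φ (c - n + 1) = φ (n - 1) := by rw [← hφ (n - 1)]; congr 1; ring
  have h₄ : φ (c - n - 1) = φ (n + 1) := by rw [← hφ (n + 1)]; congr 1; ring
  simp only [hardyWeight, hφ, h₁, h₂, h₃, h₄]
  ring

end GroundState

theorem two_mul_pow_le_add_pow_add_sub_pow {y s : ℝ} (hy : 0 ≤ y) (hs : 0 ≤ s) (m : ℕ) :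
    2 * y ^ m ≤ (y + s) ^ m + (y - s) ^ m := by
  induction m with
  | zero => norm_num
  | succ m ih =>
    have hodd : (y - s) ^ m ≤ (y + s) ^ m :=
      (le_abs_self _).trans <| (abs_pow _ _).le.trans <|
        pow_le_pow_left₀ (abs_nonneg _) (abs_le.2 ⟨by linarith, by linarith⟩) m
    linear_combination mul_le_mul_of_nonneg_left ih hy + mul_nonneg hs (sub_nonneg.2 hodd)

theorem two_mul_mul_pow_le_mul_add_pow_sub_sub_pow {y s : ℝ} (hy : 0 ≤ y) (hs : 0 ≤ s)
    (m : ℕ) : 2 * m * s * y ^ m ≤ y * ((y + s) ^ m - (y - s) ^ m) := by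
  induction m with
  | zero => norm_num
  | succ m ih =>
    push_cast
    linear_combination mul_le_mul_of_nonneg_left ih hy +
      mul_le_mul_of_nonneg_left (two_mul_pow_le_add_pow_add_sub_pow hy hs m) (mul_nonneg hs hy)

theorem two_mul_pow_add_le_sq_mul_add_pow_add_sub_pow {y s : ℝ} (hy : 0 ≤ y) (hs : 0 ≤ s)
    (m : ℕ) :
    2 * y ^ (m + 2) + m * (m - 1) * s ^ 2 * y ^ m ≤ y ^ 2 * ((y + s) ^ m + (y - s) ^ m) := by
  induction m with
  | zero => norm_num; linarith
  | succ m ih =>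
    push_cast
    linear_combination mul_le_mul_of_nonneg_left ih hy + mul_le_mul_of_nonneg_left
      (two_mul_mul_pow_le_mul_add_pow_sub_sub_pow hy hs m) (mul_nonneg hs hy)

theorem four_mul_mul_sqrt_add_sqrt_le {x : ℝ} (hx : 1 ≤ x) :
    4 * x * (√(x * (x + 1)) + √(x * (x - 1))) ≤ 8 * x ^ 2 - 1 := by
  set A := √(x * (x + 1))
  set B := √(x * (x - 1))
  have hA₀ : 0 ≤ A := Real.sqrt_nonneg _
  have hB₀ : 0 ≤ B := Real.sqrt_nonneg _
  have hA : A ^ 2 = x * (x + 1) := Real.sq_sqrt (by nlinarith)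
  have hB : B ^ 2 = x * (x - 1) := Real.sq_sqrt (by nlinarith)
  have hAB : A * B ≤ x ^ 2 - 1 / 2 := by nlinarith [mul_nonneg hA₀ hB₀]
  have hsum : (A + B) ^ 2 ≤ 4 * x ^ 2 - 1 := by nlinarith
  nlinarith [mul_nonneg (by linarith : (0 : ℝ) ≤ 4 * x) (add_nonneg hA₀ hB₀)]

namespace Rellich

/-- `((m + 1/2) (m + 3/2))^k`, cut off at `m = -1` where it is negative. -/
noncomputable def weight₁ (k : ℕ) (m : ℤ) : ℝ := max (((m : ℝ) + 1) ^ 2 - 1 / 4) 0 ^ k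

noncomputable def ground₁ (k : ℕ) (m : ℤ) : ℝ := (|(m : ℝ) + 1 / 2| ^ (k - 1))⁻¹

noncomputable def nu (k : ℕ) (n : ℤ) : ℝ := ((n : ℝ) * (n + 1)) ^ (k - 1)

/-- `|n|^{3/2-k}`, with the value at `0` replaced by `1` to keep it positive. -/
noncomputable def ground₂ (k : ℕ) (n : ℤ) : ℝ :=
  if n = 0 then 1 else (√|(n : ℝ)| ^ (2 * k - 3))⁻¹

lemma weight₁_nonneg (k : ℕ) (m : ℤ) : 0 ≤ weight₁ k m := by
  unfold weight₁
  positivity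

lemma weight₁_le (k : ℕ) (m : ℤ) : weight₁ k m ≤ ((m : ℝ) + 1) ^ (2 * k) := by
  rw [pow_mul]
  exact pow_le_pow_left₀ (le_max_right _ _) (max_le (by linarith) (sq_nonneg _)) k

lemma ground₁_pos (k : ℕ) (m : ℤ) : 0 < ground₁ k m := by
  have : (m : ℝ) + 1 / 2 ≠ 0 := by
    intro h
    have : 2 * m + 1 = 0 := by exact_mod_cast (by linarith : (2 * m + 1 : ℝ) = 0)
    omega
  unfold ground₁
  positivity

lemma nu_nonneg (k : ℕ) (n : ℤ) : 0 ≤ nu k n := by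
  have : (0 : ℤ) ≤ n * (n + 1) := by rcases le_or_gt 0 n with h | h <;> nlinarith
  exact pow_nonneg (by exact_mod_cast this) _

lemma nu_neg_sub_one (k : ℕ) (n : ℤ) : nu k (-1 - n) = nu k n := by
  simp only [nu]
  push_cast
  ring_nf

lemma ground₂_pos (k : ℕ) (n : ℤ) : 0 < ground₂ k n := by
  unfold ground₂
  split_ifs with h
  · exact one_pos
  · have : (0 : ℝ) < |(n : ℝ)| := abs_pos.2 (by exact_mod_cast h)
    positivity

lemma pow_mul_sub_inv_pow_div {t a : ℝ} (ht : 0 < t) (ha : 0 < a) (j : ℕ) :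
    (t * a) ^ (j + 1) * ((t ^ j)⁻¹ - (a ^ j)⁻¹) / (t ^ j)⁻¹ =
      t ^ (j + 1) * a ^ (j + 1) - t ^ (2 * j + 1) * a := by
  field_simp
  ring

lemma hardyWeight_weight₁_ground₁ {k : ℕ} (hk : 1 ≤ k) {m : ℤ} (hm : 1 ≤ m) :
    hardyWeight (weight₁ k) (ground₁ k) m =
      ((m : ℝ) + 1 / 2) ^ k * (((m : ℝ) + 1 / 2 + 1) ^ k + ((m : ℝ) + 1 / 2 - 1) ^ k) -
        2 * ((m : ℝ) + 1 / 2) ^ (2 * k) := by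
  obtain ⟨j, rfl⟩ : ∃ j, k = j + 1 := ⟨k - 1, by omega⟩
  set t : ℝ := (m : ℝ) + 1 / 2 with ht
  have ht₁ : 1 < t := by linarith [show (1 : ℝ) ≤ m by exact_mod_cast hm]
  have hw : weight₁ (j + 1) m = (t * (t + 1)) ^ (j + 1) := by
    rw [weight₁, max_eq_left (by nlinarith), ht]; ring
  have hw_pred : weight₁ (j + 1) (m - 1) = (t * (t - 1)) ^ (j + 1) := by
    rw [weight₁, max_eq_left (by push_cast; nlinarith), ht]; push_cast; ring
  have hφ : ground₁ (j + 1) m = (t ^ j)⁻¹ := by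
    rw [ground₁, abs_of_pos (by linarith)]; rfl
  have hφ_succ : ground₁ (j + 1) (m + 1) = ((t + 1) ^ j)⁻¹ := by
    rw [ground₁, abs_of_pos (by push_cast; linarith), ht]; push_cast; ring
  have hφ_pred : ground₁ (j + 1) (m - 1) = ((t - 1) ^ j)⁻¹ := by
    rw [ground₁, abs_of_pos (by push_cast; linarith), ht]; push_cast; ring
  rw [hardyWeight, hw, hw_pred, hφ, hφ_succ, hφ_pred, add_div,
    pow_mul_sub_inv_pow_div (by linarith) (by linarith),
    pow_mul_sub_inv_pow_div (by linarith) (by linarith)]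
  ring

lemma mul_pred_mul_pow_le {k : ℕ} (hk : 2 ≤ k) {t : ℝ} (ht : 0 ≤ t) :
    k * (k - 1) * t ^ (2 * k - 2) ≤ t ^ k * ((t + 1) ^ k + (t - 1) ^ k) - 2 * t ^ (2 * k) := by
  obtain ⟨j, rfl⟩ : ∃ j, k = j + 2 := ⟨k - 2, by omega⟩
  rw [show 2 * (j + 2) - 2 = 2 * j + 2 by omega]
  have hbinom := two_mul_pow_add_le_sq_mul_add_pow_add_sub_pow ht zero_le_one (j + 2)
  push_cast at hbinom ⊢
  linear_combination mul_le_mul_of_nonneg_left hbinom (pow_nonneg ht j)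

lemma nu_le_hardyWeight_weight₁_ground₁_of_nonneg {k : ℕ} (hk : 2 ≤ k) {m : ℤ} (hm : 0 ≤ m) :
    k * (k - 1) * nu k m ≤ hardyWeight (weight₁ k) (ground₁ k) m := by
  rcases hm.eq_or_lt with rfl | hm
  · have hφ_pred : ground₁ k (0 - 1) = ground₁ k 0 := by norm_num [ground₁]
    have hφ_succ : ground₁ k (0 + 1) ≤ ground₁ k 0 := by
      simp only [ground₁]
      gcongr
      norm_num
    have hnu : nu k 0 = 0 := by simp [nu]; omega
    rw [hardyWeight, hφ_pred, sub_self, mul_zero, add_zero, hnu, mul_zero]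
    exact div_nonneg (mul_nonneg (weight₁_nonneg _ _) (sub_nonneg.2 hφ_succ)) (ground₁_pos _ _).le
  have hm' : (0 : ℝ) ≤ m := by exact_mod_cast hm.le
  have hnu : nu k m ≤ ((m : ℝ) + 1 / 2) ^ (2 * k - 2) := by
    rw [show 2 * k - 2 = 2 * (k - 1) by omega, pow_mul]
    exact pow_le_pow_left₀ (by positivity) (by nlinarith) (k - 1)
  have hk' : (0 : ℝ) ≤ k * (k - 1) :=
    mul_nonneg (Nat.cast_nonneg k) (by linarith [show (2 : ℝ) ≤ k by exact_mod_cast hk])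
  rw [hardyWeight_weight₁_ground₁ (by omega) hm]
  exact (mul_le_mul_of_nonneg_left hnu hk').trans (mul_pred_mul_pow_le hk (by linarith))

lemma nu_le_hardyWeight_weight₁_ground₁ {k : ℕ} (hk : 2 ≤ k) (m : ℤ) :
    k * (k - 1) * nu k m ≤ hardyWeight (weight₁ k) (ground₁ k) m := by
  rcases le_or_gt 0 m with hm | hm
  · exact nu_le_hardyWeight_weight₁_ground₁_of_nonneg hk hm
  obtain ⟨m, rfl⟩ : ∃ m', m = -1 - m' := ⟨-1 - m, by ring⟩
  have hw (n : ℤ) : weight₁ k (-1 - 1 - n) = weight₁ k n := by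
    simp only [weight₁]; push_cast; ring_nf
  have hφ (n : ℤ) : ground₁ k (-1 - n) = ground₁ k n := by
    rw [ground₁, ground₁, ← abs_neg]; push_cast; ring_nf
  rw [nu_neg_sub_one, hardyWeight_reflect (-1) hw hφ]
  exact nu_le_hardyWeight_weight₁_ground₁_of_nonneg hk (by omega)

lemma pow_mul_sub_ground₂_div {k : ℕ} (hk : 2 ≤ k) {n m : ℤ} (hn : 1 ≤ n) (hm : 0 ≤ m) :
    ((n : ℝ) * m) ^ (k - 1) * (ground₂ k n - ground₂ k m) / ground₂ k n =
      ((n : ℝ) * m) ^ (k - 1) - (n : ℝ) ^ (2 * k - 3) * √(n * m) := by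
  obtain ⟨j, rfl⟩ : ∃ j, k = j + 2 := ⟨k - 2, by omega⟩
  have hn' : (0 : ℝ) < n := by exact_mod_cast hn
  rcases hm.eq_or_lt with rfl | hm
  · simp
  have hm' : (0 : ℝ) < m := by exact_mod_cast hm
  have hφ (l : ℤ) (hl : (0 : ℝ) < l) : ground₂ (j + 2) l = (√l ^ (2 * j + 1))⁻¹ := by
    rw [ground₂, if_neg (by exact_mod_cast hl.ne'), abs_of_pos hl]; rfl
  rw [hφ n hn', hφ m hm', Real.sqrt_mul hn'.le, show j + 2 - 1 = j + 1 from rfl,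
    show 2 * (j + 2) - 3 = 2 * j + 1 by omega]
  have ha := Real.sq_sqrt hn'.le
  have hb := Real.sq_sqrt hm'.le
  have ha₀ : 0 < √(n : ℝ) := Real.sqrt_pos.2 hn'
  have hb₀ : 0 < √(m : ℝ) := Real.sqrt_pos.2 hm'
  generalize √(n : ℝ) = a at ha ha₀ ⊢
  generalize √(m : ℝ) = b at hb hb₀ ⊢
  rw [← ha, ← hb]
  field_simp
  ring

lemma hardyWeight_nu_ground₂ {k : ℕ} (hk : 2 ≤ k) {n : ℤ} (hn : 1 ≤ n) :
    hardyWeight (nu k) (ground₂ k) n =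
      ((n : ℝ) * (n + 1)) ^ (k - 1) + ((n : ℝ) * (n - 1)) ^ (k - 1) -
        (n : ℝ) ^ (2 * k - 3) * (√(n * (n + 1)) + √(n * (n - 1))) := by
  have h_succ := pow_mul_sub_ground₂_div hk hn (m := n + 1) (by omega)
  have h_pred := pow_mul_sub_ground₂_div hk hn (m := n - 1) (by omega)
  have hnu_pred : nu k (n - 1) = ((n : ℝ) * (n - 1)) ^ (k - 1) := by
    simp only [nu]; push_cast; ring_nf
  push_cast at h_succ h_pred
  rw [hardyWeight, add_div, hnu_pred, h_pred, nu, h_succ]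
  ring

lemma sub_three_halves_sq_mul_pow_le {k : ℕ} (hk : 2 ≤ k) {x : ℝ} (hx : 1 ≤ x) :
    ((k : ℝ) - 3 / 2) ^ 2 * x ^ (2 * k - 4) ≤
      (x * (x + 1)) ^ (k - 1) + (x * (x - 1)) ^ (k - 1) -
        x ^ (2 * k - 3) * (√(x * (x + 1)) + √(x * (x - 1))) := by
  obtain ⟨j, rfl⟩ : ∃ j, k = j + 2 := ⟨k - 2, by omega⟩
  rw [show 2 * (j + 2) - 4 = 2 * j by omega, show 2 * (j + 2) - 3 = 2 * j + 1 by omega,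
    show j + 2 - 1 = j + 1 from rfl]
  have hx₀ : 0 ≤ x := by linarith
  have hbinom := two_mul_pow_add_le_sq_mul_add_pow_add_sub_pow hx₀ zero_le_one (j + 1)
  have hsqrt := four_mul_mul_sqrt_add_sqrt_le hx
  refine le_of_mul_le_mul_left ?_ (by positivity : (0 : ℝ) < x ^ 2)
  push_cast at hbinom ⊢
  rw [mul_pow, mul_pow]
  linear_combination mul_le_mul_of_nonneg_left hbinom (pow_nonneg hx₀ (j + 1)) +
    mul_le_mul_of_nonneg_left hsqrt (by positivity : (0 : ℝ) ≤ x ^ (2 * j + 2) / 4)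

lemma pow_le_hardyWeight_nu_ground₂ {k : ℕ} (hk : 2 ≤ k) {n : ℤ} (hn : n ≠ 0) :
    ((k : ℝ) - 3 / 2) ^ 2 * (n : ℝ) ^ (2 * k - 4) ≤ hardyWeight (nu k) (ground₂ k) n := by
  suffices h : ∀ n : ℤ, 1 ≤ n →
      ((k : ℝ) - 3 / 2) ^ 2 * (n : ℝ) ^ (2 * k - 4) ≤ hardyWeight (nu k) (ground₂ k) n by
    rcases hn.lt_or_gt with hn | hn
    · obtain ⟨n, rfl⟩ : ∃ n', n = 0 - n' := ⟨-n, by ring⟩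
      have hw (l : ℤ) : nu k (0 - 1 - l) = nu k l := by rw [zero_sub]; exact nu_neg_sub_one k l
      have hφ (l : ℤ) : ground₂ k (0 - l) = ground₂ k l := by simp [ground₂]
      rw [hardyWeight_reflect 0 hw hφ, Int.cast_sub, Int.cast_zero, zero_sub,
        Even.neg_pow ⟨k - 2, by omega⟩]
      exact h n (by omega)
    · exact h n hn
  intro n hn
  rw [hardyWeight_nu_ground₂ hk hn]
  exact sub_three_halves_sq_mul_pow_le hk (by exact_mod_cast hn)

variable {E : Type*} [NormedAddCommGroup E] [InnerProductSpace ℝ E]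

theorem hardy_nu_le_succ_pow {k : ℕ} (hk : 2 ≤ k) {f : ℤ → E} (hf : (support f).Finite) :
    k * (k - 1) * ∑' n : ℤ, nu k n * ‖f n‖ ^ 2 ≤
      ∑' n : ℤ, ((n : ℝ) + 1) ^ (2 * k) * ‖f (n + 1) - f n‖ ^ 2 := by
  have hΔf := finite_support_forward_sub hf
  rw [← tsum_mul_left]
  simp_rw [← mul_assoc]
  calc ∑' n : ℤ, k * (k - 1) * nu k n * ‖f n‖ ^ 2
      ≤ ∑' n, weight₁ k n * ‖f (n + 1) - f n‖ ^ 2 :=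
        tsum_mul_norm_sq_le_of_le_hardyWeight (weight₁_nonneg k) (ground₁_pos k) hf
          fun n _ => nu_le_hardyWeight_weight₁_ground₁ hk n
    _ ≤ _ := (summable_mul_norm_sq hΔf _).tsum_le_tsum
        (fun n => mul_le_mul_of_nonneg_right (weight₁_le k n) (sq_nonneg _))
        (summable_mul_norm_sq hΔf _)

theorem hardy_pow_le_nu {k : ℕ} (hk : 2 ≤ k) {f : ℤ → E} (hf : (support f).Finite)
    (h0 : f 0 = 0) :
    ((k : ℝ) - 3 / 2) ^ 2 * ∑' n : ℤ, (n : ℝ) ^ (2 * k - 4) * ‖f n‖ ^ 2 ≤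
      ∑' n : ℤ, nu k n * ‖f (n + 1) - f n‖ ^ 2 := by
  rw [← tsum_mul_left]
  simp_rw [← mul_assoc]
  refine tsum_mul_norm_sq_le_of_le_hardyWeight (nu_nonneg k) (ground₂_pos k) hf
    fun n hn => pow_le_hardyWeight_nu_ground₂ hk ?_
  rintro rfl
  exact hn h0

end Rellich

theorem weighted_rellich_step
    (k : ℕ) (hk : 2 ≤ k) (u : ℤ → ℂ)
    (hu : (Function.support u).Finite) (h0 : u 0 = 0) :
    ∑' n : ℤ, ‖2 * u n - u (n + 1) - u (n - 1)‖ ^ 2 * (n : ℝ) ^ (2 * k) ≥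
      (k : ℝ) * ((k : ℝ) - 1) * ((k : ℝ) - 3 / 2) ^ 2 *
        ∑' n : ℤ, ‖u n‖ ^ 2 * (n : ℝ) ^ (2 * k - 4) := by
  have hLHS : ∑' n : ℤ, ‖2 * u n - u (n + 1) - u (n - 1)‖ ^ 2 * (n : ℝ) ^ (2 * k) =
      ∑' n : ℤ, ((n : ℝ) + 1) ^ (2 * k) * ‖(u (n + 1 + 1) - u (n + 1)) - (u (n + 1) - u n)‖ ^ 2 := by
    rw [← (Equiv.addRight (1 : ℤ)).tsum_eq]
    refine tsum_congr fun n => ?_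
    rw [Equiv.coe_addRight, add_sub_cancel_right, mul_comm, ← norm_neg]
    push_cast
    congr 3
    ring
  have step₁ := Rellich.hardy_nu_le_succ_pow hk (finite_support_forward_sub hu)
  have step₂ := Rellich.hardy_pow_le_nu hk hu h0
  have hk' : (0 : ℝ) ≤ k * (k - 1) :=
    mul_nonneg (Nat.cast_nonneg k) (by linarith [show (2 : ℝ) ≤ k by exact_mod_cast hk])
  rw [ge_iff_le, hLHS]
  calc (k : ℝ) * (k - 1) * (k - 3 / 2) ^ 2 * ∑' n : ℤ, ‖u n‖ ^ 2 * (n : ℝ) ^ (2 * k - 4)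
      = k * (k - 1) * ((k - 3 / 2) ^ 2 * ∑' n : ℤ, (n : ℝ) ^ (2 * k - 4) * ‖u n‖ ^ 2) := by
        simp_rw [mul_comm (‖u _‖ ^ 2)]
        ring
    _ ≤ k * (k - 1) * ∑' n, Rellich.nu k n * ‖u (n + 1) - u n‖ ^ 2 :=
        mul_le_mul_of_nonneg_left step₂ hk'
    _ ≤ _ := step₁
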